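/- Let K be a number field with ring of integers O_K, 𝔫 a nonzero ideal, ψ a primitive multiplicative character of (O_K/𝔫)^×, and r ∈ O_K coprime to 𝔫. Then for an ideal 𝔡 dividing 𝔫, the sum ∑ ψ(a), taken over units a of O_K/𝔫 with a ≡ r (mod 𝔡), is nonzero if and only if 𝔡 = 𝔫; and when 𝔡 = 𝔫 the sum equals ψ(r). -/

import Mathlib

open NumberField

set_option synthInstance.maxHeartbeats 1000000
set_option maxHeartbeats 1000000

/-- For `𝔡 ∣ 𝔫`, the natural map `(𝓞 K ⧸ 𝔫)ˣ →* (𝓞 K ⧸ 𝔡)ˣ`. -/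
noncomputable def unitsMapFactor (K : Type*) [Field K] [NumberField K]
    {𝔫 𝔡 : Ideal (𝓞 K)} (h : 𝔡 ∣ 𝔫) : (𝓞 K ⧸ 𝔫)ˣ →* (𝓞 K ⧸ 𝔡)ˣ :=
  Units.map (Ideal.Quotient.factor (Ideal.le_of_dvd h)).toMonoidHom

/-- `𝔡` is an induced modulus for the character `χ` modulo `𝔫` if `𝔡 ∣ 𝔫` and
`χ(a) = χ(b)` whenever the units `a, b` of `𝓞 K ⧸ 𝔫` satisfy `a ≡ b (mod 𝔡)`. -/
def IsInducedModulus (K : Type*) [Field K] [NumberField K]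
    (𝔫 : Ideal (𝓞 K)) (χ : (𝓞 K ⧸ 𝔫)ˣ →* ℂ) (𝔡 : Ideal (𝓞 K)) : Prop :=
  ∃ h : 𝔡 ∣ 𝔫, ∀ a b : (𝓞 K ⧸ 𝔫)ˣ,
    unitsMapFactor K h a = unitsMapFactor K h b → χ a = χ b

def IsPrimitiveChar (K : Type*) [Field K] [NumberField K]
    (𝔫 : Ideal (𝓞 K)) (χ : (𝓞 K ⧸ 𝔫)ˣ →* ℂ) : Prop :=
  ∀ 𝔡 : Ideal (𝓞 K), IsInducedModulus K 𝔫 χ 𝔡 → 𝔡 = 𝔫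

/-!
Multiplication by a unit `t ≡ 1 (mod 𝔡)` permutes the units `a ≡ r (mod 𝔡)`, so the sum `S`
satisfies `ψ(t) S = S`. If `S ≠ 0`, then `ψ` is trivial on the kernel of reduction modulo `𝔡`,
i.e. `𝔡` is an induced modulus, and primitivity gives `𝔡 = 𝔫`. For `𝔡 = 𝔫` the sum has the
single term `ψ(r)`, which is nonzero because `r` is a unit modulo `𝔫`.
-/

theorem isUnit_quotient_mk_of_span_sup_eq_top {R : Type*} [CommRing R] {I : Ideal R} {r : R}
    (h : Ideal.span {r} ⊔ I = ⊤) : IsUnit (Ideal.Quotient.mk I r) := by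
  rw [← Ideal.span_singleton_eq_top, ← Set.image_singleton, ← Ideal.map_span,
    ← bot_sup_eq (Ideal.map _ _), ← Ideal.map_quotient_self I, ← Ideal.map_sup, sup_comm, h,
    Ideal.map_top]

section FiberSum

variable {G H R : Type*} [Group G] [MulOneClass H] [Semiring R] [IsDomain R]

theorem mul_finsum_fiber_of_mem_ker (f : G →* H) (ψ : G →* R) (p : H → Prop) {t : G}
    (ht : t ∈ f.ker) :
    ψ t * ∑ᶠ (a) (_ : p (f a)), ψ a = ∑ᶠ (a) (_ : p (f a)), ψ a := by
  classical
  calc ψ t * ∑ᶠ (a) (_ : p (f a)), ψ a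
      = ∑ᶠ (a) (_ : p (f (t * a))), ψ (t * a) := by
        rw [mul_finsum]
        refine finsum_congr fun a => ?_
        rw [map_mul, f.mem_ker.1 ht, one_mul, map_mul, finsum_eq_if, finsum_eq_if, mul_ite,
          mul_zero]
    _ = ∑ᶠ (a) (_ : p (f a)), ψ a :=
        finsum_comp_equiv (Equiv.mulLeft t) (f := fun a => ∑ᶠ (_ : p (f a)), ψ a)

theorem map_eq_one_of_finsum_fiber_ne_zero (f : G →* H) (ψ : G →* R) (p : H → Prop)
    (hS : ∑ᶠ (a) (_ : p (f a)), ψ a ≠ 0) {t : G} (ht : t ∈ f.ker) : ψ t = 1 :=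
  (mul_eq_right₀ hS).1 (mul_finsum_fiber_of_mem_ker f ψ p ht)

end FiberSum

section NumberField

variable (K : Type*) [Field K] [NumberField K] {𝔫 𝔡 : Ideal (𝓞 K)}

theorem unitsMapFactor_self (h : 𝔫 ∣ 𝔫) : unitsMapFactor K h = MonoidHom.id _ := by
  ext a
  simp [unitsMapFactor, Ideal.Quotient.factor_eq]

theorem finsum_fiber_self_eq (h : 𝔫 ∣ 𝔫) (χ : (𝓞 K ⧸ 𝔫)ˣ →* ℂ) {r : 𝓞 K} {u : (𝓞 K ⧸ 𝔫)ˣ}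
    (hu : (u : 𝓞 K ⧸ 𝔫) = Ideal.Quotient.mk 𝔫 r) :
    ∑ᶠ (a : (𝓞 K ⧸ 𝔫)ˣ) (_ : (unitsMapFactor K h a : 𝓞 K ⧸ 𝔫) = Ideal.Quotient.mk 𝔫 r),
      χ a = χ u := by
  simp_rw [unitsMapFactor_self, MonoidHom.id_apply, ← hu, Units.val_inj, finsum_cond_eq_left]

theorem isInducedModulus_of_ker_le {χ : (𝓞 K ⧸ 𝔫)ˣ →* ℂ} (h : 𝔡 ∣ 𝔫)
    (hker : (unitsMapFactor K h).ker ≤ χ.ker) : IsInducedModulus K 𝔫 χ 𝔡 :=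
  ⟨h, fun _ _ hab => χ.eq_iff.2 (hker ((MonoidHom.eq_iff _).1 hab))⟩

end NumberField

theorem primitive_char_sum_general (K : Type*) [Field K] [NumberField K]
    (𝔫 𝔡 : Ideal (𝓞 K)) (h𝔡 : 𝔡 ∣ 𝔫)
    (ψ : (𝓞 K ⧸ 𝔫)ˣ →* ℂ) (hψ : IsPrimitiveChar K 𝔫 ψ)
    (r : 𝓞 K) (hr : Ideal.span {r} ⊔ 𝔫 = ⊤) :
    ((∑ᶠ (a : (𝓞 K ⧸ 𝔫)ˣ)
        (_ : (unitsMapFactor K h𝔡 a : 𝓞 K ⧸ 𝔡) = Ideal.Quotient.mk 𝔡 r),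
          ψ a) ≠ 0 ↔ 𝔡 = 𝔫) ∧
      ∀ u : (𝓞 K ⧸ 𝔫)ˣ, (u : 𝓞 K ⧸ 𝔫) = Ideal.Quotient.mk 𝔫 r → 𝔡 = 𝔫 →
        (∑ᶠ (a : (𝓞 K ⧸ 𝔫)ˣ)
          (_ : (unitsMapFactor K h𝔡 a : 𝓞 K ⧸ 𝔡) = Ideal.Quotient.mk 𝔡 r),
            ψ a) = ψ u := by
  obtain ⟨u₀, hu₀⟩ := isUnit_quotient_mk_of_span_sup_eq_top hr
  refine ⟨⟨fun hS => hψ 𝔡 (isInducedModulus_of_ker_le K h𝔡 fun t ht => ?_), ?_⟩, ?_⟩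
  · exact map_eq_one_of_finsum_fiber_ne_zero (unitsMapFactor K h𝔡) ψ
      (fun x => (x : 𝓞 K ⧸ 𝔡) = Ideal.Quotient.mk 𝔡 r) hS ht
  · rintro rfl
    rw [finsum_fiber_self_eq K h𝔡 ψ hu₀]
    exact ((Group.isUnit u₀).map ψ).ne_zero
  · rintro u hu rfl
    exact finsum_fiber_self_eq K h𝔡 ψ hu

/-- Let `ψ` be a primitive character modulo the nonzero ideal `𝔫` and `r ∈ 𝓞 K`
coprime to `𝔫`.  For `𝔡 ∣ 𝔫`, the sum `∑ ψ(a)` over units `a` of `𝓞 K ⧸ 𝔫` with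
`a ≡ r (mod 𝔡)` is nonzero if and only if `𝔡 = 𝔫`; and if `𝔡 = 𝔫`, the sum
equals `ψ(r)`. -/
theorem primitive_char_sum (K : Type*) [Field K] [NumberField K]
    (𝔫 𝔡 : Ideal (𝓞 K)) (h𝔫 : 𝔫 ≠ ⊥) (h𝔡 : 𝔡 ∣ 𝔫)
    (ψ : (𝓞 K ⧸ 𝔫)ˣ →* ℂ) (hψ : IsPrimitiveChar K 𝔫 ψ)
    (r : 𝓞 K) (hr : Ideal.span {r} ⊔ 𝔫 = ⊤) :
    ((∑ᶠ (a : (𝓞 K ⧸ 𝔫)ˣ)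
        (_ : (unitsMapFactor K h𝔡 a : 𝓞 K ⧸ 𝔡) = Ideal.Quotient.mk 𝔡 r),
          ψ a) ≠ 0 ↔ 𝔡 = 𝔫) ∧
      ∀ u : (𝓞 K ⧸ 𝔫)ˣ, (u : 𝓞 K ⧸ 𝔫) = Ideal.Quotient.mk 𝔫 r → 𝔡 = 𝔫 →
        (∑ᶠ (a : (𝓞 K ⧸ 𝔫)ˣ)
          (_ : (unitsMapFactor K h𝔡 a : 𝓞 K ⧸ 𝔡) = Ideal.Quotient.mk 𝔡 r),
            ψ a) = ψ u :=
  primitive_char_sum_general K 𝔫 𝔡 h𝔡 ψ hψ r hr
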